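/- arXiv:1605.08738 — 5 statements merged into one kernel-verified Lean document; each statement's English description precedes it below -/
import Mathlib

section
/- Let U be a finite universe, F a finite multiset of subsets of U, and s, d, t natural numbers. For each N ⊆ U let F_N be the sub-multiset of copies of N in F, and let C be the set of all covers c = {N_1,…,N_b} with b ≤ t, N_i ⊆ U, and ∪ N_i = U. Then the following are equivalent: (1) for every sub-multiset S ⊆ F with |S| ≤ s there exist pairwise disjoint sub-multisets T_1,…,T_d of F \ S, each of cardinality at most t, with ∪_{X∈T_i} X = U for each i; (2) for every integer assignment (z_N)_{N⊆U} with 0 ≤ z_N ≤ |F_N| and Σ_N z_N ≤ s, there exists an integer assignment (x_c)_{c∈C} with 0 ≤ x_c ≤ d, Σ_c x_c ≥ d, and for every N ⊆ U, Σ_{c∈C, N∈c} x_c ≤ |F_N| − z_N. -/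
/-- The Resiliency Disjoint Set Cover Problem: for every sub-multiset `S ⊆ F` with
`|S| ≤ s` there exist `d` pairwise disjoint sub-multisets of `F \ S`, each of
cardinality at most `t`, each covering the universe. -/
def RDSCP {α : Type*} [Fintype α] [DecidableEq α]
    (F : Multiset (Finset α)) (s d t : ℕ) : Prop :=
  ∀ S : Multiset (Finset α), S ≤ F → Multiset.card S ≤ s →
    ∃ T : Fin d → Multiset (Finset α),
      (∑ i, T i) ≤ F - S ∧
      ∀ i, Multiset.card (T i) ≤ t ∧ ∀ a : α, ∃ X ∈ T i, a ∈ X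

/-- The set `𝒞` of all covers `c = {N₁,…,N_b}` with `b ≤ t` and `∪ Nᵢ = U`. -/
def coversOf (α : Type*) [Fintype α] [DecidableEq α] (t : ℕ) : Finset (Finset (Finset α)) :=
  Finset.univ.filter (fun c : Finset (Finset α) => c.card ≤ t ∧ ∀ a : α, ∃ N ∈ c, a ∈ N)

/-!
Both conditions amount to choosing a multiset `P` of `d` covers from `coversOf α t` whose
members, counted with multiplicity, use each set `N` at most as often as `N` survives in
`F - S`, where the removed sets `S` and the vector `z` determine each other by
`z N = S.count N`. A family `T` gives `P` by replacing each `T i` with its underlying set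
(dropping duplicate copies only frees sets of `F`), and an enumeration of `P` gives back `T`.
An ILP solution `x` gives `P` as any `d` elements of the multiset holding `x c` copies of each
cover `c`, and `P` gives back `x c = P.count c`.
-/

namespace Multiset

theorem exists_le_card_eq {β : Type*} {M : Multiset β} {n : ℕ} (hn : n ≤ card M) :
    ∃ P ≤ M, card P = n := by
  induction M using Quotient.inductionOn with
  | h l => exact ⟨l.take n, (List.take_sublist n l).subperm, by simpa using hn⟩

theorem exists_fin_map_univ_eq {β : Type*} {M : Multiset β} {n : ℕ} (hM : card M = n) :
    ∃ f : Fin n → β, Finset.univ.val.map f = M := by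
  subst hM
  induction M using Quotient.inductionOn with
  | h l =>
    refine ⟨l.get, ?_⟩
    change (Finset.univ : Finset (Fin l.length)).val.map l.get = (l : Multiset β)
    rw [Fin.univ_val_map, List.ofFn_get]

theorem bind_map_univ_val {ι β γ : Type*} [Fintype ι] (f : ι → β) (g : β → Multiset γ) :
    (Finset.univ.val.map f).bind g = ∑ i, g (f i) := by
  rw [bind_map]; rfl

theorem count_bind_val_eq_sum_count {β : Type*} [DecidableEq β] {P : Multiset (Finset β)}
    {C : Finset (Finset β)} (hPC : ∀ c ∈ P, c ∈ C) (N : β) :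
    (P.bind Finset.val).count N = ∑ c ∈ C with N ∈ c, P.count c := by
  calc (P.bind Finset.val).count N = (P.map fun c => c.val.count N).sum := count_bind
    _ = ∑ c ∈ P.toFinset, P.count c • c.val.count N := Finset.sum_multiset_map_count _ _
    _ = ∑ c ∈ C, P.count c • c.val.count N :=
      Finset.sum_subset (fun c hc => hPC c (mem_toFinset.1 hc))
        (fun c _ hc => by rw [count_eq_zero.2 (mt mem_toFinset.2 hc), zero_smul])
    _ = ∑ c ∈ C with N ∈ c, P.count c := by
      rw [Finset.sum_filter]
      refine Finset.sum_congr rfl fun c _ => ?_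
      rw [count_eq_of_nodup c.nodup]
      by_cases hN : N ∈ c <;> simp [hN]

end Multiset

open Multiset

theorem exists_ilp_solution_iff_exists_multiset {β : Type*} [DecidableEq β]
    (C : Finset (Finset β)) (d : ℕ) (b : β → ℕ) :
    (∃ x : Finset β → ℕ, (∀ c, x c ≤ d) ∧ d ≤ ∑ c ∈ C, x c ∧
        ∀ N, ∑ c ∈ C with N ∈ c, x c ≤ b N) ↔
      ∃ P : Multiset (Finset β), card P = d ∧ (∀ c ∈ P, c ∈ C) ∧
        ∀ N, (P.bind Finset.val).count N ≤ b N := by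
  constructor
  · rintro ⟨x, -, hdx, hxb⟩
    set M := ∑ c ∈ C, replicate (x c) c
    have hMC : ∀ c ∈ M, c ∈ C := fun c hc => by
      obtain ⟨c', hc', hcc'⟩ := mem_sum.1 hc
      rwa [eq_of_mem_replicate hcc']
    have hMcount : ∀ c ∈ C, M.count c = x c := fun c hc => by
      simp [M, count_sum', count_replicate, hc]
    have hMcard : card M = ∑ c ∈ C, x c := by simp [M, card_sum]
    obtain ⟨P, hPM, hPcard⟩ := exists_le_card_eq (hMcard ▸ hdx)
    have hPC : ∀ c ∈ P, c ∈ C := fun c hc => hMC c (mem_of_le hPM hc)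
    refine ⟨P, hPcard, hPC, fun N => ?_⟩
    calc (P.bind Finset.val).count N = ∑ c ∈ C with N ∈ c, P.count c :=
          count_bind_val_eq_sum_count hPC N
      _ ≤ ∑ c ∈ C with N ∈ c, M.count c := Finset.sum_le_sum fun c _ => count_le_of_le c hPM
      _ = ∑ c ∈ C with N ∈ c, x c :=
          Finset.sum_congr rfl fun c hc => hMcount c (Finset.mem_filter.1 hc).1
      _ ≤ b N := hxb N
  · rintro ⟨P, rfl, hPC, hPb⟩
    exact ⟨P.count, fun c => count_le_card c P, (sum_count_eq_card hPC).ge,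
      fun N => count_bind_val_eq_sum_count hPC N ▸ hPb N⟩

section Covers

variable {α : Type*} [Fintype α] [DecidableEq α]

theorem mem_coversOf {t : ℕ} {c : Finset (Finset α)} :
    c ∈ coversOf α t ↔ c.card ≤ t ∧ ∀ a, ∃ N ∈ c, a ∈ N := by
  simp [coversOf]

theorem toFinset_mem_coversOf {t : ℕ} {T : Multiset (Finset α)} (hT : card T ≤ t)
    (hcov : ∀ a, ∃ X ∈ T, a ∈ X) : T.toFinset ∈ coversOf α t :=
  mem_coversOf.2 ⟨(toFinset_card_le T).trans hT, fun a => by simpa using hcov a⟩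

theorem exists_covers_le_iff_exists_multiset (R : Multiset (Finset α)) (d t : ℕ) :
    (∃ T : Fin d → Multiset (Finset α), ∑ i, T i ≤ R ∧
        ∀ i, card (T i) ≤ t ∧ ∀ a, ∃ X ∈ T i, a ∈ X) ↔
      ∃ P : Multiset (Finset (Finset α)), card P = d ∧ (∀ c ∈ P, c ∈ coversOf α t) ∧
        P.bind Finset.val ≤ R := by
  constructor
  · rintro ⟨T, hTR, hT⟩
    refine ⟨Finset.univ.val.map fun i => (T i).toFinset, by simp, ?_, ?_⟩
    · simp only [mem_map, Finset.mem_val, Finset.mem_univ, true_and, forall_exists_index]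
      rintro c i rfl
      exact toFinset_mem_coversOf (hT i).1 (hT i).2
    · rw [bind_map_univ_val]
      exact (Finset.sum_le_sum fun i _ => dedup_le (T i)).trans hTR
  · rintro ⟨P, hPcard, hPC, hPR⟩
    obtain ⟨f, rfl⟩ := exists_fin_map_univ_eq hPcard
    refine ⟨fun i => (f i).val, by rwa [← bind_map_univ_val], fun i => ?_⟩
    have := mem_coversOf.1 (hPC (f i) (mem_map_of_mem f (Finset.mem_univ_val i)))
    exact ⟨by simpa using this.1, this.2⟩

end Covers

/-- Lemma 1 (correctness of the ILP encoding of RDSCP): the RDSCP instance is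
positive iff the ILP `𝓛` is `z`-resilient. -/
theorem stmt4 {α : Type*} [Fintype α] [DecidableEq α]
    (F : Multiset (Finset α)) (s d t : ℕ) :
    RDSCP F s d t ↔
      ∀ z : Finset α → ℕ,
        (∀ N : Finset α, z N ≤ F.count N) →
        (∑ N : Finset α, z N) ≤ s →
        ∃ x : Finset (Finset α) → ℕ,
          (∀ c : Finset (Finset α), x c ≤ d) ∧
          d ≤ (∑ c ∈ coversOf α t, x c) ∧
          ∀ N : Finset α, (∑ c ∈ (coversOf α t).filter (fun c => N ∈ c), x c) ≤ F.count N - z N := by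
  simp only [exists_ilp_solution_iff_exists_multiset]
  constructor
  · intro h z hzF hzs
    set S := ∑ N, replicate (z N) N
    have hScount : ∀ N, S.count N = z N := fun N => by simp [S, count_sum', count_replicate]
    have hSF : S ≤ F := le_iff_count.2 fun N => hScount N ▸ hzF N
    obtain ⟨P, hPcard, hPC, hPR⟩ :=
      (exists_covers_le_iff_exists_multiset (F - S) d t).1 (h S hSF (by simpa [S, card_sum]))
    refine ⟨P, hPcard, hPC, fun N => ?_⟩
    simpa [count_sub, hScount] using le_iff_count.1 hPR N
  · intro h S hSF hScard
    obtain ⟨P, hPcard, hPC, hPb⟩ :=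
      h S.count (le_iff_count.1 hSF) (by rwa [sum_count_eq_card fun _ _ => Finset.mem_univ _])
    exact (exists_covers_le_iff_exists_multiset (F - S) d t).2
      ⟨P, hPcard, hPC, le_iff_count.2 fun N => by simpa [count_sub] using hPb N⟩
end

section
/- The reduction from δ-Hitting Set to RDSCP with d = 1 and t = δ + 1 is correct: in the constructed instance, every set cover of size at most δ + 1 has the form {s^V_{i_1},…,s^V_{i_δ}, s^S_j} where S_j = {v_{i_1},…,v_{i_δ}}; consequently, there exists a family S of size at most k intersecting every size-(δ+1) set cover of the constructed instance if and only if the δ-Hitting Set instance has a hitting set of size at most k. -/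
/-- The universe of the constructed RDSCP instance:
elements `p^j_x` (for `j ∈ [m]`, `x ∈ [δ]`), elements `u^V_Q` for every
`(δ-1)`-subset `Q` of `[n]`, and the special element `u*`. -/
def HSUni (n m δ : ℕ) :=
  (Fin m × Fin δ) ⊕ ({Q : Finset (Fin n) // Q.card = δ - 1} ⊕ Unit)

/-- The set `s^V_i`: all `p^j_x` with `S_j[x] = v_i` together with all `u^V_Q` with `i ∉ Q`. -/
def sV {n m δ : ℕ} (S : Fin m → Fin δ → Fin n) (i : Fin n) : Set (HSUni n m δ) :=
  {u | (∃ j x, u = Sum.inl (j, x) ∧ S j x = i) ∨ ∃ Q, u = Sum.inr (Sum.inl Q) ∧ i ∉ Q.1}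

/-- The set `s^S_j`: the element `u*` together with `U^S \ P^j`. -/
def sS {n m δ : ℕ} (j : Fin m) : Set (HSUni n m δ) :=
  {u | u = Sum.inr (Sum.inr ()) ∨ ∃ j' x, u = Sum.inl (j', x) ∧ j' ≠ j}

/-- The constructed family `F = F^V ∪ F^S`. -/
def HSFam {n m δ : ℕ} (S : Fin m → Fin δ → Fin n) : Set (Set (HSUni n m δ)) :=
  Set.range (sV S) ∪ Set.range sS

section aux
variable {n m δ : ℕ} (S : Fin m → Fin δ → Fin n)

lemma ustar_mem_sS (j : Fin m) : (Sum.inr (Sum.inr ()) : HSUni n m δ) ∈ sS j := Or.inl rfl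

lemma ustar_not_mem_sV (i : Fin n) : (Sum.inr (Sum.inr ()) : HSUni n m δ) ∉ sV S i := by
  rintro (⟨j, x, h, -⟩ | ⟨Q, h, -⟩) <;> simp [HSUni] at h

lemma sV_ne_sS (i : Fin n) (j : Fin m) : sV S i ≠ sS j := by
  intro h
  exact ustar_not_mem_sV S i (h ▸ ustar_mem_sS (n := n) (δ := δ) j)

lemma uQ_not_mem_sS (Q : {Q : Finset (Fin n) // Q.card = δ - 1}) (j : Fin m) :
    (Sum.inr (Sum.inl Q) : HSUni n m δ) ∉ sS j := by
  rintro (h | ⟨j', x, h, -⟩) <;> simp [HSUni] at h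

lemma mem_sV_Q (i : Fin n) (Q : {Q : Finset (Fin n) // Q.card = δ - 1}) :
    (Sum.inr (Sum.inl Q) : HSUni n m δ) ∈ sV S i ↔ i ∉ Q.1 := by
  constructor
  · rintro (⟨j, x, h, -⟩ | ⟨Q', h, hQ'⟩)
    · simp [HSUni] at h
    · have : Q = Q' := by
        have := (Sum.inr_injective (α := Fin m × Fin δ)) h
        exact Sum.inl_injective this
      rw [this]; exact hQ'
  · intro h; exact Or.inr ⟨Q, rfl, h⟩

lemma mem_sV_p (i : Fin n) (j : Fin m) (x : Fin δ) :
    (Sum.inl (j, x) : HSUni n m δ) ∈ sV S i ↔ S j x = i := by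
  constructor
  · rintro (⟨j', x', h, hS⟩ | ⟨Q, h, -⟩)
    · obtain ⟨h1, h2⟩ := Prod.mk.injEq .. ▸ (Sum.inl_injective h)
      subst h1; subst h2; exact hS
    · simp [HSUni] at h
  · intro h; exact Or.inl ⟨j, x, rfl, h⟩

lemma mem_sS_p (j j' : Fin m) (x : Fin δ) :
    (Sum.inl (j', x) : HSUni n m δ) ∈ sS j ↔ j' ≠ j := by
  constructor
  · rintro (h | ⟨j'', x', h, hne⟩)
    · simp [HSUni] at h
    · obtain ⟨h1, h2⟩ := Prod.mk.injEq .. ▸ (Sum.inl_injective h)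
      subst h1; exact hne
  · intro h; exact Or.inr ⟨j', x, rfl, h⟩

lemma sV_inj (hδ : 2 ≤ δ) (hδn : δ ≤ n) : Function.Injective (sV S) := by
  intro a b hab
  by_contra hne
  obtain ⟨Q, hbQ, hQsub, hQcard⟩ :=
    Finset.exists_subsuperset_card_eq (n := δ - 1) (show {b} ⊆ Finset.univ \ {a} by
      simp [Finset.subset_iff, Ne.symm hne])
      (by rw [Finset.card_singleton]; omega)
      (by rw [Finset.card_sdiff_of_subset (by simp), Finset.card_univ, Fintype.card_fin,
            Finset.card_singleton]; omega)
  have haQ : a ∉ Q := fun h => by simpa using hQsub h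
  have hbQ' : b ∈ Q := hbQ (Finset.mem_singleton_self b)
  have h1 : (Sum.inr (Sum.inl ⟨Q, hQcard⟩) : HSUni n m δ) ∈ sV S a :=
    (mem_sV_Q S a ⟨Q, hQcard⟩).2 haQ
  rw [hab, mem_sV_Q] at h1
  exact h1 hbQ'

lemma sS_inj (hδ : 0 < δ) : Function.Injective (sS : Fin m → Set (HSUni n m δ)) := by
  intro a b hab
  by_contra hne
  have h1 : (Sum.inl (a, ⟨0, hδ⟩) : HSUni n m δ) ∈ sS b := (mem_sS_p b a ⟨0, hδ⟩).2 hne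
  rw [← hab, mem_sS_p] at h1
  exact h1 rfl

open Classical in
lemma cover_Tj (hδ : 2 ≤ δ) (hinj : ∀ j, Function.Injective (S j)) (j : Fin m) :
    ⋃₀ ((insert (sS j) (Finset.image (fun x => sV S (S j x)) Finset.univ) :
      Finset (Set (HSUni n m δ))) : Set (Set (HSUni n m δ))) = Set.univ := by
  ext u
  simp only [Set.mem_univ, iff_true, Set.mem_sUnion, Finset.coe_insert, Set.mem_insert_iff,
    Finset.coe_image, Finset.mem_coe, Finset.mem_image, Finset.mem_univ, true_and]
  match u with
  | Sum.inl (j', x) =>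
    by_cases hj : j' = j
    · subst hj
      exact ⟨sV S (S j' x), Or.inr ⟨x, by simp⟩, (mem_sV_p S _ j' x).2 rfl⟩
    · exact ⟨sS j, Or.inl rfl, (mem_sS_p j j' x).2 hj⟩
  | Sum.inr (Sum.inl Q) =>
    have : ¬ (Finset.univ.image (S j) ⊆ Q.1) := by
      intro hsub
      have h1 : (Finset.univ.image (S j)).card = δ := by
        rw [Finset.card_image_of_injective _ (hinj j)]; simp
      have := Finset.card_le_card hsub
      rw [h1, Q.2] at this
      omega
    obtain ⟨i, hi, hiQ⟩ := Finset.not_subset.1 this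
    obtain ⟨x, -, hx⟩ := Finset.mem_image.1 hi
    exact ⟨sV S i, Or.inr ⟨x, by simp [hx]⟩, (mem_sV_Q S i Q).2 hiQ⟩
  | Sum.inr (Sum.inr ()) =>
    exact ⟨sS j, Or.inl rfl, ustar_mem_sS j⟩

open Classical in
lemma Tj_card (hδ : 2 ≤ δ) (hδn : δ ≤ n) (j : Fin m) :
    (insert (sS j) (Finset.image (fun x => sV S (S j x)) Finset.univ) :
      Finset (Set (HSUni n m δ))).card ≤ δ + 1 := by
  calc _ ≤ (Finset.image (fun x => sV S (S j x)) Finset.univ).card + 1 :=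
        Finset.card_insert_le _ _
    _ ≤ δ + 1 := by
        have := Finset.card_image_le (s := (Finset.univ : Finset (Fin δ)))
          (f := fun x => sV S (S j x))
        simp at this
        omega

open Classical in
lemma Tj_sub (j : Fin m) :
    ((insert (sS j) (Finset.image (fun x => sV S (S j x)) Finset.univ) :
      Finset (Set (HSUni n m δ))) : Set (Set (HSUni n m δ))) ⊆ HSFam S := by
  intro s hs
  simp only [Finset.coe_insert, Set.mem_insert_iff, Finset.coe_image, Finset.mem_coe,
    Finset.mem_image, Finset.mem_univ, true_and, Set.mem_image] at hs
  rcases hs with rfl | ⟨x, rfl⟩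
  · exact Or.inr ⟨j, rfl⟩
  · exact Or.inl ⟨S j x, rfl⟩

open Classical in
lemma cover_structure (hδ : 2 ≤ δ) (hδn : δ ≤ n) (hinj : ∀ j, Function.Injective (S j))
    (T : Finset (Set (HSUni n m δ))) (hsub : ↑T ⊆ HSFam S) (hcard : T.card ≤ δ + 1)
    (hcov : ⋃₀ (T : Set (Set (HSUni n m δ))) = Set.univ) :
    ∃ j : Fin m, T = insert (sS j) (Finset.image (fun x => sV S (S j x)) Finset.univ) := by
  -- u* is covered, so some sS j ∈ T
  have hstar : (Sum.inr (Sum.inr ()) : HSUni n m δ) ∈ ⋃₀ (T : Set (Set (HSUni n m δ))) := by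
    rw [hcov]; trivial
  obtain ⟨s, hsT, hs⟩ := hstar
  obtain ⟨j, rfl⟩ : ∃ j, sS j = s := by
    rcases hsub hsT with ⟨i, rfl⟩ | h
    · exact absurd hs (ustar_not_mem_sV S i)
    · exact h
  set I : Finset (Fin n) := Finset.univ.filter (fun i => sV S i ∈ T) with hI
  have hIcard : δ ≤ I.card := by
    by_contra hlt
    push_neg at hlt
    obtain ⟨Q, hIQ, -, hQcard⟩ := Finset.exists_subsuperset_card_eq
      (Finset.subset_univ I) (show I.card ≤ δ - 1 by omega)
      (by simp; omega)
    have hQ : (Sum.inr (Sum.inl ⟨Q, hQcard⟩) : HSUni n m δ) ∈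
        ⋃₀ (T : Set (Set (HSUni n m δ))) := by rw [hcov]; trivial
    obtain ⟨s, hsT, hsmem⟩ := hQ
    rcases hsub hsT with ⟨i, rfl⟩ | ⟨j', rfl⟩
    · have hiQ : i ∉ Q := (mem_sV_Q S i ⟨Q, hQcard⟩).1 hsmem
      have : i ∈ I := Finset.mem_filter.2 ⟨Finset.mem_univ i, Finset.mem_coe.1 hsT⟩
      exact hiQ (hIQ this)
    · exact uQ_not_mem_sS ⟨Q, hQcard⟩ j' hsmem
  have hsub2 : insert (sS j) (I.image (sV S)) ⊆ T := by
    intro s hs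
    rcases Finset.mem_insert.1 hs with rfl | hs
    · exact hsT
    · obtain ⟨i, hi, rfl⟩ := Finset.mem_image.1 hs
      exact (Finset.mem_filter.1 hi).2
  have hcard2 : (insert (sS j) (I.image (sV S))).card = I.card + 1 := by
    rw [Finset.card_insert_of_notMem, Finset.card_image_of_injective _ (sV_inj S hδ hδn)]
    intro h
    obtain ⟨i, -, hi⟩ := Finset.mem_image.1 h
    exact sV_ne_sS S i j hi
  have hTeq : T = insert (sS j) (I.image (sV S)) := by
    refine (Finset.eq_of_subset_of_card_le hsub2 ?_).symm
    rw [hcard2]; omega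
  have hIδ : I.card = δ := by
    have := Finset.card_le_card hsub2
    rw [hcard2] at this
    omega
  -- image (S j) univ = I
  have himgsub : Finset.univ.image (S j) ⊆ I := by
    intro i hi
    obtain ⟨x, -, rfl⟩ := Finset.mem_image.1 hi
    have hp : (Sum.inl (j, x) : HSUni n m δ) ∈ ⋃₀ (T : Set (Set (HSUni n m δ))) := by
      rw [hcov]; trivial
    obtain ⟨s, hsT, hsmem⟩ := hp
    rw [hTeq] at hsT
    rcases Finset.mem_insert.1 hsT with rfl | hsT
    · exact absurd ((mem_sS_p j j x).1 hsmem) (fun h => h rfl)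
    · obtain ⟨i', hi', rfl⟩ := Finset.mem_image.1 hsT
      have heq := (mem_sV_p S i' j x).1 hsmem
      refine Finset.mem_filter.2 ⟨Finset.mem_univ _, ?_⟩
      rw [heq, hTeq]
      exact Finset.mem_insert.2 (Or.inr hsT)
  have himg : Finset.univ.image (S j) = I := by
    refine Finset.eq_of_subset_of_card_le himgsub ?_
    rw [Finset.card_image_of_injective _ (hinj j), hIδ]; simp
  refine ⟨j, ?_⟩
  rw [hTeq, ← himg, Finset.image_image]
  rfl

end aux

open Classical in
/-- Correctness of the reduction from δ-Hitting Set to RDSCP with `d = 1`, `t = δ + 1`: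
every set cover of size at most `δ + 1` of the constructed instance has the form
`{s^V_{i₁}, …, s^V_{i_δ}, s^S_j}` with `S_j = {v_{i₁}, …, v_{i_δ}}`; consequently, there
is a family of at most `k` sets intersecting every such cover iff the δ-Hitting Set
instance has a hitting set of size at most `k`. -/
theorem stmt7 (n m δ k : ℕ) (hδ : 2 ≤ δ) (hδn : δ ≤ n)
    (S : Fin m → Fin δ → Fin n) (hinj : ∀ j, Function.Injective (S j)) :
    (∀ T : Finset (Set (HSUni n m δ)), ↑T ⊆ HSFam S → T.card ≤ δ + 1 →
        ⋃₀ (T : Set (Set (HSUni n m δ))) = Set.univ →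
        ∃ j : Fin m, T = insert (sS j) (Finset.image (fun x => sV S (S j x)) Finset.univ)) ∧
    ((∃ B : Finset (Set (HSUni n m δ)), ↑B ⊆ HSFam S ∧ B.card ≤ k ∧
        ∀ T : Finset (Set (HSUni n m δ)), ↑T ⊆ HSFam S → T.card ≤ δ + 1 →
          ⋃₀ (T : Set (Set (HSUni n m δ))) = Set.univ → (B ∩ T).Nonempty) ↔
      (∃ C : Finset (Fin n), C.card ≤ k ∧ ∀ j : Fin m, ∃ x : Fin δ, S j x ∈ C)) := by
  have hδ0 : 0 < δ := by omega
  have hn0 : 0 < n := by omega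
  refine ⟨cover_structure S hδ hδn hinj, ?_, ?_⟩
  · rintro ⟨B, hBsub, hBcard, hBint⟩
    set g : Set (HSUni n m δ) → Fin n := fun s =>
      if h : ∃ i, sV S i = s then h.choose
      else if h : ∃ j, sS j = s then S h.choose ⟨0, hδ0⟩ else ⟨0, hn0⟩ with hg
    refine ⟨B.image g, le_trans (Finset.card_image_le) hBcard, fun j => ?_⟩
    obtain ⟨b, hb⟩ := hBint _ (Tj_sub S j) (Tj_card S hδ hδn j) (cover_Tj S hδ hinj j)
    rw [Finset.mem_inter] at hb
    obtain ⟨hbB, hbT⟩ := hb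
    rcases Finset.mem_insert.1 hbT with rfl | hbT
    · refine ⟨⟨0, hδ0⟩, Finset.mem_image.2 ⟨sS j, hbB, ?_⟩⟩
      rw [hg]
      simp only
      rw [dif_neg (by rintro ⟨i, hi⟩; exact sV_ne_sS S i j hi),
        dif_pos ⟨j, rfl⟩]
      congr 1
      exact sS_inj hδ0 (⟨j, (rfl : sS j = sS j)⟩ : ∃ j', sS j' = sS j).choose_spec
    · obtain ⟨x, -, rfl⟩ := Finset.mem_image.1 hbT
      refine ⟨x, Finset.mem_image.2 ⟨sV S (S j x), hbB, ?_⟩⟩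
      rw [hg]
      simp only
      rw [dif_pos ⟨S j x, rfl⟩]
      exact sV_inj S hδ hδn
        (⟨S j x, rfl⟩ : ∃ i, sV S i = sV S (S j x)).choose_spec
  · rintro ⟨C, hCcard, hhit⟩
    refine ⟨C.image (sV S), ?_, le_trans Finset.card_image_le hCcard, ?_⟩
    · intro s hs
      obtain ⟨i, -, rfl⟩ := Finset.mem_image.1 (by exact_mod_cast hs)
      exact Or.inl ⟨i, rfl⟩
    · intro T hTsub hTcard hTcov
      obtain ⟨j, rfl⟩ := cover_structure S hδ hδn hinj T hTsub hTcard hTcov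
      obtain ⟨x, hx⟩ := hhit j
      refine ⟨sV S (S j x), Finset.mem_inter.2 ⟨Finset.mem_image.2 ⟨S j x, hx, rfl⟩, ?_⟩⟩
      exact Finset.mem_insert.2 (Or.inr (Finset.mem_image.2 ⟨x, Finset.mem_univ x, rfl⟩))
end

section
/- The reduction from 3-Dimensional Matching to RDSCP with s = 0 and t = 4 is correct: the constructed instance admits d = k pairwise disjoint set covers of size at most 4 if and only if the 3-Dimensional Matching instance has k pairwise disjoint hyperedges. -/
/-! Each member of the family contains exactly one of the special elements `u_X, u_Y, u_Z, u_*`,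
so a cover by at most four members consists of one set through each of them: `s^X_x`, `s^Y_y`,
`s^Z_z` and some `s^*_j`. The elements `u^X_j, u^Y_j, u^Z_j` missed by `s^*_j` then force
`(x, y, z) = e_j`. Since such an `s^X_x` occurs only once in the family, disjoint covers pick
hyperedges with distinct first coordinates, and likewise for the other two; conversely the
covers `{s^X, s^Y, s^Z of e_j, s^*_j}` of a matching are disjoint. -/

/-- The universe of the 3-Dimensional Matching reduction: elements `u^X_j, u^Y_j, u^Z_j`
(encoded as `(j, 0), (j, 1), (j, 2)`) and the four special elements `u_X, u_Y, u_Z, u_*`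
(encoded as `Fin 4`). -/
def TDMUni (m : ℕ) := (Fin m × Fin 3) ⊕ Fin 4

/-- The set `s^X_i`: all `u^X_j` with `x_{i} ` the first coordinate of `e_j`, plus `u_X`. -/
def sX {n m : ℕ} (M : Fin m → Fin n × Fin n × Fin n) (i : Fin n) : Set (TDMUni m) :=
  {w | (∃ j, w = Sum.inl (j, 0) ∧ (M j).1 = i) ∨ w = Sum.inr 0}

/-- The set `s^Y_i`. -/
def sY {n m : ℕ} (M : Fin m → Fin n × Fin n × Fin n) (i : Fin n) : Set (TDMUni m) :=
  {w | (∃ j, w = Sum.inl (j, 1) ∧ (M j).2.1 = i) ∨ w = Sum.inr 1}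

/-- The set `s^Z_i`. -/
def sZ {n m : ℕ} (M : Fin m → Fin n × Fin n × Fin n) (i : Fin n) : Set (TDMUni m) :=
  {w | (∃ j, w = Sum.inl (j, 2) ∧ (M j).2.2 = i) ∨ w = Sum.inr 2}

/-- The set `s^*_j`: all elements except `u^X_j, u^Y_j, u^Z_j, u_X, u_Y, u_Z`. -/
def sStar {m : ℕ} (j : Fin m) : Set (TDMUni m) :=
  {w | w ≠ Sum.inl (j, 0) ∧ w ≠ Sum.inl (j, 1) ∧ w ≠ Sum.inl (j, 2) ∧
       w ≠ Sum.inr 0 ∧ w ≠ Sum.inr 1 ∧ w ≠ Sum.inr 2}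

/-- The constructed family `F = F_X ∪ F_Y ∪ F_Z ∪ F^*` (as a multiset). -/
def TDMFam {n m : ℕ} (M : Fin m → Fin n × Fin n × Fin n) : Multiset (Set (TDMUni m)) :=
  (Finset.univ.val.map (sX M)) + (Finset.univ.val.map (sY M)) +
    (Finset.univ.val.map (sZ M)) + (Finset.univ.val.map sStar)
section Multiset

variable {ι α : Type*}

theorem Multiset.eq_of_mem_of_mem_of_card_le {N : ℕ} {T : Multiset (Set α)} (p : Fin N → α)
    (hcard : Multiset.card T ≤ N) (hcov : ∀ q, ∃ A ∈ T, p q ∈ A)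
    (hsep : ∀ A ∈ T, ∀ q q', p q ∈ A → p q' ∈ A → q = q')
    {A B : Set α} (hA : A ∈ T) (hB : B ∈ T) {q : Fin N} (hqA : p q ∈ A) (hqB : p q ∈ B) :
    A = B := by
  classical
  choose g hgT hpg using hcov
  have hg : Function.Injective g := fun q q' h => hsep _ (hgT q') q q' (h ▸ hpg q) (hpg q')
  have himage : Finset.univ.image g = T.toFinset := by
    refine Finset.eq_of_subset_of_card_le (fun C hC => ?_) ?_
    · obtain ⟨q, -, rfl⟩ := Finset.mem_image.1 hC
      exact Multiset.mem_toFinset.2 (hgT q)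
    calc T.toFinset.card ≤ Multiset.card T := Multiset.toFinset_card_le T
      _ ≤ N := hcard
      _ = (Finset.univ.image g).card := by simp [Finset.card_image_of_injective _ hg]
  have hgq : ∀ C ∈ T, p q ∈ C → C = g q := by
    intro C hC hqC
    obtain ⟨q', -, rfl⟩ := Finset.mem_image.1 (himage ▸ Multiset.mem_toFinset.2 hC)
    rw [hsep _ hC q' q (hpg q') hqC]
  rw [hgq A hA hqA, hgq B hB hqB]

theorem Multiset.eq_of_mem_of_mem_of_sum_le [Fintype ι] [DecidableEq α] {T : ι → Multiset α}
    {F : Multiset α} {a : α} (hsum : ∑ i, T i ≤ F) (hcount : F.count a ≤ 1) {i i' : ι}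
    (hi : a ∈ T i) (hi' : a ∈ T i') : i = i' := by
  classical
  by_contra hne
  have hpair : T i + T i' ≤ ∑ i, T i := by
    rw [← Finset.sum_pair hne]
    exact Finset.sum_le_sum_of_subset (Finset.subset_univ _)
  have := Multiset.count_le_of_le a (hpair.trans hsum)
  have := Multiset.count_pos.2 hi
  have := Multiset.count_pos.2 hi'
  rw [Multiset.count_add] at *
  omega

theorem Multiset.count_map_univ_le_one [DecidableEq α] {β : Type*} [Fintype β] {g : β → α}
    {b : β} (hg : ∀ b', g b' = g b → b' = b) : (Finset.univ.val.map g).count (g b) ≤ 1 := by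
  rw [Multiset.count_map, ← Finset.filter_val]
  exact Finset.card_le_one.2 fun x hx y hy => by
    simp only [Finset.mem_filter, Finset.mem_univ, true_and] at hx hy
    rw [hg x hx.symm, hg y hy.symm]

theorem Multiset.map_univ_le_univ [Fintype ι] {β : Type*} [Fintype β] {g : ι → β}
    (hg : Function.Injective g) : Finset.univ.val.map g ≤ Finset.univ.val :=
  (Multiset.le_iff_subset (Finset.univ.nodup.map hg)).2 fun _ _ => Finset.mem_univ _

theorem Finset.sum_singleton_eq_map (s : Finset ι) (g : ι → α) :
    ∑ x ∈ s, ({g x} : Multiset α) = s.val.map g :=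
  Multiset.bind_singleton s.val g

end Multiset

namespace TDM

variable {n m : ℕ} {M : Fin m → Fin n × Fin n × Fin n}

def coord (c : Fin 3) (e : Fin n × Fin n × Fin n) : Fin n := ![e.1, e.2.1, e.2.2] c

theorem forall_coord_ne_iff {e e' : Fin n × Fin n × Fin n} :
    (∀ c, coord c e ≠ coord c e') ↔ e.1 ≠ e'.1 ∧ e.2.1 ≠ e'.2.1 ∧ e.2.2 ≠ e'.2.2 :=
  ⟨fun h => ⟨h 0, h 1, h 2⟩, fun h c => by fin_cases c <;> simp [coord, h]⟩

/- `edgeElem j c` is `u^c_j` and `specialElem q` is `u_X, u_Y, u_Z, u_*`. Naming them keeps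
their type `TDMUni m` rather than the underlying sum type, which `simp` would not match. -/
def edgeElem (j : Fin m) (c : Fin 3) : TDMUni m := Sum.inl (j, c)

def specialElem (q : Fin 4) : TDMUni m := Sum.inr q

@[simp]
theorem edgeElem_inj {j j' : Fin m} {c c' : Fin 3} :
    edgeElem j c = edgeElem j' c' ↔ j = j' ∧ c = c' :=
  Sum.inl_injective.eq_iff.trans Prod.mk_inj

@[simp]
theorem specialElem_inj {q q' : Fin 4} : specialElem (m := m) q = specialElem q' ↔ q = q' :=
  Sum.inr_injective.eq_iff

@[simp]
theorem edgeElem_ne_specialElem {j : Fin m} {c : Fin 3} {q : Fin 4} :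
    edgeElem j c ≠ specialElem q :=
  Sum.inl_ne_inr

@[simp]
theorem specialElem_ne_edgeElem {j : Fin m} {c : Fin 3} {q : Fin 4} :
    specialElem q ≠ edgeElem j c :=
  Sum.inr_ne_inl

theorem TDMUni.forall {p : TDMUni m → Prop} :
    (∀ w, p w) ↔ (∀ j c, p (edgeElem j c)) ∧ ∀ q, p (specialElem q) :=
  Sum.forall.trans (and_congr_left' Prod.forall)

/- `sCoord M 0`, `sCoord M 1`, `sCoord M 2` are `sX M`, `sY M`, `sZ M` up to `rfl`. -/
def sCoord (M : Fin m → Fin n × Fin n × Fin n) (c : Fin 3) (i : Fin n) : Set (TDMUni m) :=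
  {w | (∃ j, w = edgeElem j c ∧ coord c (M j) = i) ∨ w = specialElem c.castSucc}

theorem sStar_eq (j : Fin m) : sStar j = {w | w ≠ edgeElem j 0 ∧ w ≠ edgeElem j 1 ∧
    w ≠ edgeElem j 2 ∧ w ≠ specialElem 0 ∧ w ≠ specialElem 1 ∧ w ≠ specialElem 2} :=
  rfl

theorem TDMFam_eq :
    TDMFam M = ∑ c, Finset.univ.val.map (sCoord M c) + Finset.univ.val.map sStar := by
  rw [Fin.sum_univ_three]
  rfl

@[simp]
theorem edgeElem_mem_sCoord {c c' : Fin 3} {j : Fin m} {i : Fin n} :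
    edgeElem j c' ∈ sCoord M c i ↔ c' = c ∧ coord c (M j) = i := by
  simp [sCoord]

@[simp]
theorem specialElem_mem_sCoord {c : Fin 3} {q : Fin 4} {i : Fin n} :
    specialElem q ∈ sCoord M c i ↔ q = c.castSucc := by
  simp [sCoord]

@[simp]
theorem edgeElem_mem_sStar {c : Fin 3} {j j' : Fin m} : edgeElem j' c ∈ sStar j ↔ j' ≠ j := by
  fin_cases c <;> simp [sStar_eq]

@[simp]
theorem specialElem_mem_sStar {q : Fin 4} {j : Fin m} : specialElem q ∈ sStar j ↔ q = 3 := by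
  fin_cases q <;> simp [sStar_eq]

theorem mem_TDMFam {A : Set (TDMUni m)} :
    A ∈ TDMFam M ↔ (∃ c i, sCoord M c i = A) ∨ ∃ j, sStar j = A := by
  simp [TDMFam_eq, Multiset.mem_sum]

theorem exists_forall_sCoord_mem_of_cover {T : Multiset (Set (TDMUni m))} (hT : T ≤ TDMFam M)
    (hcard : Multiset.card T ≤ 4) (hcov : ∀ w, ∃ A ∈ T, w ∈ A) :
    ∃ j, ∀ c, sCoord M c (coord c (M j)) ∈ T := by
  have hfam : ∀ A ∈ T, (∃ c i, sCoord M c i = A) ∨ ∃ j, sStar j = A :=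
    fun A hA => mem_TDMFam.1 (Multiset.mem_of_le hT hA)
  have hsep : ∀ A ∈ T, ∀ q q', specialElem q ∈ A → specialElem q' ∈ A → q = q' := by
    intro A hA q q' hq hq'
    rcases hfam A hA with ⟨c, i, rfl⟩ | ⟨j, rfl⟩ <;> simp_all
  obtain ⟨S, hST, hS⟩ := hcov (specialElem 3)
  obtain ⟨j, rfl⟩ : ∃ j, sStar j = S := by
    rcases hfam S hST with ⟨c, i, rfl⟩ | h
    · fin_cases c <;> simp at hS
    · exact h
  refine ⟨j, fun c => ?_⟩
  obtain ⟨A, hAT, hjA⟩ := hcov (edgeElem j c)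
  rcases hfam A hAT with ⟨c', i, rfl⟩ | ⟨j', rfl⟩
  · obtain ⟨rfl, rfl⟩ := edgeElem_mem_sCoord.1 hjA
    exact hAT
  · -- `sStar j'` shares `u_*` with `sStar j`, so it is `sStar j`, which misses `u^c_j`.
    have hj' : sStar j' = sStar j := Multiset.eq_of_mem_of_mem_of_card_le specialElem hcard
      (fun q => hcov _) hsep hAT hST (q := 3) (by simp) hS
    simp [hj'] at hjA

theorem count_sCoord_le_one [DecidableEq (Set (TDMUni m))] (c : Fin 3) (j : Fin m) :
    (TDMFam M).count (sCoord M c (coord c (M j))) ≤ 1 := by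
  have hsame : (Finset.univ.val.map (sCoord M c)).count (sCoord M c (coord c (M j))) ≤ 1 :=
    Multiset.count_map_univ_le_one fun i h => by
      have := h ▸ (edgeElem_mem_sCoord (M := M) (j := j)).2 ⟨rfl, rfl⟩
      exact ((edgeElem_mem_sCoord (M := M)).1 this).2.symm
  have hother : ∀ c' ≠ c,
      (Finset.univ.val.map (sCoord M c')).count (sCoord M c (coord c (M j))) = 0 := by
    intro c' hc'
    rw [Multiset.count_eq_zero, Multiset.mem_map]
    rintro ⟨i, -, h⟩
    have := h ▸ (specialElem_mem_sCoord (M := M) (i := i)).2 rfl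
    exact hc' (Fin.castSucc_injective _ (specialElem_mem_sCoord.1 this))
  have hstar : (Finset.univ.val.map sStar).count (sCoord M c (coord c (M j))) = 0 := by
    rw [Multiset.count_eq_zero, Multiset.mem_map]
    rintro ⟨j', -, h⟩
    have := h ▸ (specialElem_mem_sStar (j := j')).2 rfl
    fin_cases c <;> simp at this
  rw [TDMFam_eq, Multiset.count_add, Multiset.count_sum',
    Finset.sum_eq_single c (fun c' _ => hother c') (by simp), hstar]
  exact hsame

theorem forall_injective_coord_iff {ι : Type*} {e : ι → Fin n × Fin n × Fin n} :
    (∀ c, Function.Injective fun i => coord c (e i)) ↔ ∀ i i', i ≠ i' →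
      (e i).1 ≠ (e i').1 ∧ (e i).2.1 ≠ (e i').2.1 ∧ (e i).2.2 ≠ (e i').2.2 := by
  simp only [← forall_coord_ne_iff]
  exact ⟨fun h i i' hne c heq => hne (h c heq),
    fun h c i i' heq => by_contra fun hne => h i i' hne c heq⟩

def edgeCover (M : Fin m → Fin n × Fin n × Fin n) (j : Fin m) : Multiset (Set (TDMUni m)) :=
  ∑ c, {sCoord M c (coord c (M j))} + {sStar j}

theorem card_edgeCover (j : Fin m) : Multiset.card (edgeCover M j) = 4 := by
  simp [edgeCover]

theorem sCoord_mem_edgeCover (c : Fin 3) (j : Fin m) :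
    sCoord M c (coord c (M j)) ∈ edgeCover M j :=
  Multiset.mem_add.2 <|
    Or.inl (Multiset.mem_sum.2 ⟨c, Finset.mem_univ c, Multiset.mem_singleton_self _⟩)

theorem sStar_mem_edgeCover (j : Fin m) : sStar j ∈ edgeCover M j :=
  Multiset.mem_add.2 (Or.inr (Multiset.mem_singleton_self _))

theorem edgeCover_covers (j : Fin m) : ∀ w, ∃ A ∈ edgeCover M j, w ∈ A := by
  refine TDMUni.forall.2 ⟨fun j' c => ?_, fun q => ?_⟩
  · by_cases hj : j' = j
    · subst hj
      exact ⟨_, sCoord_mem_edgeCover c j', by simp⟩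
    · exact ⟨_, sStar_mem_edgeCover j, by simpa using hj⟩
  · rcases Fin.eq_castSucc_or_eq_last q with ⟨c, rfl⟩ | rfl
    · exact ⟨_, sCoord_mem_edgeCover c j, by simp⟩
    · exact ⟨_, sStar_mem_edgeCover j, by simp⟩

theorem sum_edgeCover_le {ι : Type*} [Fintype ι] {f : ι → Fin m}
    (hf : ∀ c, Function.Injective fun i => coord c (M (f i))) :
    ∑ i, edgeCover M (f i) ≤ TDMFam M := by
  have hf' : Function.Injective f := fun i i' h => hf 0 (by simp only [h])
  simp only [edgeCover, Finset.sum_add_distrib]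
  rw [Finset.sum_comm, TDMFam_eq]
  simp only [Finset.sum_singleton_eq_map]
  gcongr with c
  · simpa only [Multiset.map_map, Function.comp_def] using
      Multiset.map_le_map (f := sCoord M c) (Multiset.map_univ_le_univ (hf c))
  · simpa only [Multiset.map_map, Function.comp_def] using
      Multiset.map_le_map (f := sStar) (Multiset.map_univ_le_univ hf')

end TDM

open TDM in
/-- Correctness of the reduction from 3-Dimensional Matching to RDSCP with `s = 0`,
`t = 4`: the constructed instance admits `d = k` pairwise disjoint set covers of size
at most 4 iff the 3-Dimensional Matching instance has `k` pairwise disjoint hyperedges. -/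
theorem stmt9 (n m k : ℕ) (M : Fin m → Fin n × Fin n × Fin n) :
    (∃ T : Fin k → Multiset (Set (TDMUni m)),
        (∑ i, T i) ≤ TDMFam M ∧
        ∀ i, Multiset.card (T i) ≤ 4 ∧ ∀ w : TDMUni m, ∃ A ∈ T i, w ∈ A) ↔
      (∃ f : Fin k → Fin m, ∀ i i' : Fin k, i ≠ i' →
        (M (f i)).1 ≠ (M (f i')).1 ∧ (M (f i)).2.1 ≠ (M (f i')).2.1 ∧
          (M (f i)).2.2 ≠ (M (f i')).2.2) := by
  classical
  simp only [← forall_injective_coord_iff]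
  constructor
  · rintro ⟨T, hsum, hT⟩
    have hle : ∀ i, T i ≤ TDMFam M := fun i =>
      (Finset.single_le_sum (fun _ _ => Multiset.zero_le _) (Finset.mem_univ i)).trans hsum
    choose f hf using fun i => exists_forall_sCoord_mem_of_cover (hle i) (hT i).1 (hT i).2
    refine ⟨f, fun c i i' (h : coord c (M (f i)) = coord c (M (f i'))) => ?_⟩
    exact Multiset.eq_of_mem_of_mem_of_sum_le hsum (count_sCoord_le_one c (f i)) (hf i c)
      (h ▸ hf i' c)
  · rintro ⟨f, hf⟩
    exact ⟨fun i => edgeCover M (f i), sum_edgeCover_le hf,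
      fun i => ⟨(card_edgeCover (f i)).le, edgeCover_covers (f i)⟩⟩
end

section
/- In the 3-Dimensional Matching reduction, any cover T of the constructed universe with |T| ≤ 4 contains exactly one set from each of F_X, F_Y, F_Z, F^*; moreover if T = {s^X_{i1}, s^Y_{i2}, s^Z_{i3}, s^*_{i4}} then (x_{i1}, y_{i2}, z_{i3}) = e_{i4}. -/
/-!
Each of the four special elements `u_X, u_Y, u_Z, u_*` lies in exactly one of the four
subfamilies, and each set of the family contains exactly one special element. Covering them
therefore takes four distinct sets `s^X_{i₁}, s^Y_{i₂}, s^Z_{i₃}, s^*_{i₄}`, which exhaust `T`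
when `|T| ≤ 4`. Finally `s^*_{i₄}` misses `u^X_{i₄}, u^Y_{i₄}, u^Z_{i₄}`, so they must be covered
by `s^X_{i₁}, s^Y_{i₂}, s^Z_{i₃}` respectively, i.e. `e_{i₄} = (i₁, i₂, i₃)`.
-/

open Finset Function

theorem Finset.image_univ_eq_of_injective_of_card_le {ι α : Type*} [Fintype ι] [DecidableEq α]
    {T : Finset α} {f : ι → α} (hf : Injective f) (hmem : ∀ i, f i ∈ T)
    (hcard : #T ≤ Fintype.card ι) : univ.image f = T :=
  eq_of_subset_of_card_le (image_subset_iff.2 fun i _ => hmem i)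
    (by rwa [card_image_of_injective _ hf, card_univ])

theorem Finset.image_univ_fin_four {α : Type*} [DecidableEq α] (a b c d : α) :
    univ.image ![a, b, c, d] = {a, b, c, d} := by
  ext; simp [Fin.exists_fin_succ, eq_comm]

namespace TDMUni

variable {n m : ℕ} {M : Fin m → Fin n × Fin n × Fin n}

/-- `special 0, special 1, special 2, special 3` are `u_X, u_Y, u_Z, u_*`. -/
def special (a : Fin 4) : TDMUni m := Sum.inr a

/-- `ofTriple j 0, ofTriple j 1, ofTriple j 2` are `u^X_j, u^Y_j, u^Z_j`. -/
def ofTriple (j : Fin m) (k : Fin 3) : TDMUni m := Sum.inl (j, k)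

def family (M : Fin m → Fin n × Fin n × Fin n) : Set (Set (TDMUni m)) :=
  Set.range (sX M) ∪ Set.range (sY M) ∪ Set.range (sZ M) ∪ Set.range sStar

/-- Indexed by the special element each set contains. -/
def quadruple (M : Fin m → Fin n × Fin n × Fin n) (i₁ i₂ i₃ : Fin n) (i₄ : Fin m) :
    Fin 4 → Set (TDMUni m) :=
  ![sX M i₁, sY M i₂, sZ M i₃, sStar i₄]

-- `TDMUni` is a plain `def`, so `simp` cannot see through the memberships in the frozen
-- set-builder definitions; rewriting with `Set.mem_ofPred` first opens them.
@[simp] lemma special_mem_sX {i : Fin n} {a : Fin 4} : special a ∈ sX M i ↔ a = 0 := by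
  rw [sX, Set.mem_ofPred]; simp [special, TDMUni]

@[simp] lemma special_mem_sY {i : Fin n} {a : Fin 4} : special a ∈ sY M i ↔ a = 1 := by
  rw [sY, Set.mem_ofPred]; simp [special, TDMUni]

@[simp] lemma special_mem_sZ {i : Fin n} {a : Fin 4} : special a ∈ sZ M i ↔ a = 2 := by
  rw [sZ, Set.mem_ofPred]; simp [special, TDMUni]

@[simp] lemma special_mem_sStar {j : Fin m} {a : Fin 4} : special a ∈ sStar j ↔ a = 3 := by
  rw [sStar, Set.mem_ofPred]; fin_cases a <;> simp [special, TDMUni]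

@[simp] lemma ofTriple_mem_sX {i : Fin n} {j : Fin m} {k : Fin 3} :
    ofTriple j k ∈ sX M i ↔ k = 0 ∧ (M j).1 = i := by
  rw [sX, Set.mem_ofPred]; simp [ofTriple, TDMUni, and_comm]

@[simp] lemma ofTriple_mem_sY {i : Fin n} {j : Fin m} {k : Fin 3} :
    ofTriple j k ∈ sY M i ↔ k = 1 ∧ (M j).2.1 = i := by
  rw [sY, Set.mem_ofPred]; simp [ofTriple, TDMUni, and_comm]

@[simp] lemma ofTriple_mem_sZ {i : Fin n} {j : Fin m} {k : Fin 3} :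
    ofTriple j k ∈ sZ M i ↔ k = 2 ∧ (M j).2.2 = i := by
  rw [sZ, Set.mem_ofPred]; simp [ofTriple, TDMUni, and_comm]

@[simp] lemma ofTriple_mem_sStar {j j' : Fin m} {k : Fin 3} :
    ofTriple j' k ∈ sStar j ↔ j' ≠ j := by
  rw [sStar, Set.mem_ofPred]; fin_cases k <;> simp [ofTriple, TDMUni]

lemma eq_sX_of_special_zero_mem {A : Set (TDMUni m)} (hA : A ∈ family M)
    (h : special 0 ∈ A) : ∃ i, A = sX M i := by
  rcases hA with ((⟨i, rfl⟩ | ⟨i, rfl⟩) | ⟨i, rfl⟩) | ⟨j, rfl⟩ <;>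
    first | exact ⟨_, rfl⟩ | simp at h

lemma eq_sY_of_special_one_mem {A : Set (TDMUni m)} (hA : A ∈ family M)
    (h : special 1 ∈ A) : ∃ i, A = sY M i := by
  rcases hA with ((⟨i, rfl⟩ | ⟨i, rfl⟩) | ⟨i, rfl⟩) | ⟨j, rfl⟩ <;>
    first | exact ⟨_, rfl⟩ | simp at h

lemma eq_sZ_of_special_two_mem {A : Set (TDMUni m)} (hA : A ∈ family M)
    (h : special 2 ∈ A) : ∃ i, A = sZ M i := by
  rcases hA with ((⟨i, rfl⟩ | ⟨i, rfl⟩) | ⟨i, rfl⟩) | ⟨j, rfl⟩ <;>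
    first | exact ⟨_, rfl⟩ | simp at h

lemma eq_sStar_of_special_three_mem {A : Set (TDMUni m)} (hA : A ∈ family M)
    (h : special 3 ∈ A) : ∃ j, A = sStar j := by
  rcases hA with ((⟨i, rfl⟩ | ⟨i, rfl⟩) | ⟨i, rfl⟩) | ⟨j, rfl⟩ <;>
    first | exact ⟨_, rfl⟩ | simp at h

lemma special_mem_quadruple_iff {i₁ i₂ i₃ : Fin n} {i₄ : Fin m} {a b : Fin 4} :
    special a ∈ quadruple M i₁ i₂ i₃ i₄ b ↔ a = b := by
  fin_cases b <;> simp [quadruple]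

lemma quadruple_injective (i₁ i₂ i₃ : Fin n) (i₄ : Fin m) :
    Injective (quadruple M i₁ i₂ i₃ i₄) := fun _ _ hab =>
  special_mem_quadruple_iff.1 (hab ▸ special_mem_quadruple_iff.2 rfl)

lemma image_univ_quadruple [DecidableEq (Set (TDMUni m))] (i₁ i₂ i₃ : Fin n) (i₄ : Fin m) :
    univ.image (quadruple M i₁ i₂ i₃ i₄) = {sX M i₁, sY M i₂, sZ M i₃, sStar i₄} :=
  Finset.image_univ_fin_four ..

lemma triple_eq_of_forall_ofTriple_mem [DecidableEq (Set (TDMUni m))] {i₁ i₂ i₃ : Fin n}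
    {i₄ : Fin m} (h : ∀ k, ∃ A ∈ ({sX M i₁, sY M i₂, sZ M i₃, sStar i₄} : Finset _),
      ofTriple i₄ k ∈ A) :
    M i₄ = (i₁, i₂, i₃) := by
  have hX := h 0
  have hY := h 1
  have hZ := h 2
  simp at hX hY hZ
  exact Prod.ext hX (Prod.ext hY hZ)

end TDMUni

open TDMUni in
open Classical in
/-- In the 3-Dimensional Matching reduction, any cover `T` of the constructed universe
with `|T| ≤ 4` contains exactly one set from each of `F_X`, `F_Y`, `F_Z`, `F^*`; moreover
if `T = {s^X_{i₁}, s^Y_{i₂}, s^Z_{i₃}, s^*_{i₄}}` then `(x_{i₁}, y_{i₂}, z_{i₃}) = e_{i₄}`. -/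
theorem stmt10 (n m : ℕ) (M : Fin m → Fin n × Fin n × Fin n)
    (T : Finset (Set (TDMUni m)))
    (hfam : ↑T ⊆ Set.range (sX M) ∪ Set.range (sY M) ∪ Set.range (sZ M) ∪
      Set.range (sStar : Fin m → Set (TDMUni m)))
    (hcard : T.card ≤ 4)
    (hcover : ∀ w : TDMUni m, ∃ A ∈ T, w ∈ A) :
    ∃ (i₁ i₂ i₃ : Fin n) (i₄ : Fin m),
      T = {sX M i₁, sY M i₂, sZ M i₃, sStar i₄} ∧ M i₄ = (i₁, i₂, i₃) := by
  obtain ⟨A₁, hA₁, h₁⟩ := hcover (special 0)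
  obtain ⟨i₁, rfl⟩ := eq_sX_of_special_zero_mem (hfam hA₁) h₁
  obtain ⟨A₂, hA₂, h₂⟩ := hcover (special 1)
  obtain ⟨i₂, rfl⟩ := eq_sY_of_special_one_mem (hfam hA₂) h₂
  obtain ⟨A₃, hA₃, h₃⟩ := hcover (special 2)
  obtain ⟨i₃, rfl⟩ := eq_sZ_of_special_two_mem (hfam hA₃) h₃
  obtain ⟨A₄, hA₄, h₄⟩ := hcover (special 3)
  obtain ⟨i₄, rfl⟩ := eq_sStar_of_special_three_mem (hfam hA₄) h₄
  have hmem : ∀ a, quadruple M i₁ i₂ i₃ i₄ a ∈ T := by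
    intro a
    fin_cases a <;> assumption
  have hT : T = {sX M i₁, sY M i₂, sZ M i₃, sStar i₄} := by
    rw [← image_univ_quadruple, image_univ_eq_of_injective_of_card_le
      (quadruple_injective i₁ i₂ i₃ i₄) hmem hcard]
  exact ⟨i₁, i₂, i₃, i₄, hT,
    triple_eq_of_forall_ofTriple_mem fun k => hT ▸ hcover (ofTriple i₄ k)⟩
end

section
/- Let Q ⊆ ℝ^{m+p} be defined by a system R h + S α ≤ t, and define Q/ℤ^p = {h ∈ ℚ^m : ∃ α ∈ ℤ^p, (h, α) ∈ Q}. Let the ILP resiliency system R consist of A x ≤ b, C x + D z ≤ e, F z ≤ g, and define J by the rows (A; C) and Q by h¹ = b, h² = e − D α, F α ≤ g. Then R is z-resilient (every integral z with F z ≤ g extends to an integral x with A x ≤ b and C x + D z ≤ e) if and only if for all h ∈ Q/ℤ^p there exists an integral x with J x ≤ h. -/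
/-- Correctness of the reduction from ILP Resiliency to Parametric Integer Linear
Programming: the system `𝓡` (consisting of `A x ≤ b`, `C x + D z ≤ e`, `F z ≤ g`)
is `z`-resilient iff for all `h = (h¹, h²) ∈ Q/ℤ^p` (where `Q` is given by `h¹ = b`,
`h² = e - D α`, `F α ≤ g`) there exists an integral `x` with `A x ≤ h¹` and `C x ≤ h²`. -/
theorem stmt14 {n p m₁ m₂ q : ℕ}
    (A : Matrix (Fin m₁) (Fin n) ℚ) (b : Fin m₁ → ℚ)
    (C : Matrix (Fin m₂) (Fin n) ℚ) (D : Matrix (Fin m₂) (Fin p) ℚ) (e : Fin m₂ → ℚ)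
    (F : Matrix (Fin q) (Fin p) ℚ) (g : Fin q → ℚ) :
    (∀ z : Fin p → ℤ, F.mulVec (fun i => (z i : ℚ)) ≤ g →
      ∃ x : Fin n → ℤ,
        A.mulVec (fun i => (x i : ℚ)) ≤ b ∧
        C.mulVec (fun i => (x i : ℚ)) + D.mulVec (fun i => (z i : ℚ)) ≤ e) ↔
    (∀ h : (Fin m₁ → ℚ) × (Fin m₂ → ℚ),
      (∃ α : Fin p → ℤ,
        h.1 = b ∧ h.2 = e - D.mulVec (fun i => (α i : ℚ)) ∧
        F.mulVec (fun i => (α i : ℚ)) ≤ g) →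
      ∃ x : Fin n → ℤ,
        A.mulVec (fun i => (x i : ℚ)) ≤ h.1 ∧ C.mulVec (fun i => (x i : ℚ)) ≤ h.2) := by
  constructor
  · rintro H ⟨h1, h2⟩ ⟨α, rfl, rfl, hF⟩
    obtain ⟨x, hA, hC⟩ := H α hF
    exact ⟨x, hA, fun i => by have := hC i; simp [Pi.add_apply] at this ⊢; linarith⟩
  · intro H z hF
    obtain ⟨x, hA, hC⟩ := H (b, e - D.mulVec (fun i => (z i : ℚ))) ⟨z, rfl, rfl, hF⟩
    exact ⟨x, hA, fun i => by have := hC i; simp at this ⊢; linarith⟩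
end
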